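/- Let a, b, c, d be real numbers with a > 0, b > 0, c > 0, d > 0 satisfying d² = a² + b² + c² + 2abc/d. Then there exists a quadrilateral with these side lengths inscribed in the semicircle having the side of length d as diameter: setting R = d/2, there exist angles β, γ with π ≥ β ≥ γ ≥ 0 such that, for A = (−R, 0), B = P_R(β), C = P_R(γ), D = (R, 0), one has dist A B = a, dist B C = b, and dist C D = c. -/

import Mathlib

/-!
Put `α = arcsin (a / d)` and `δ = arcsin (c / d)`. The relation on the sides is equivalent to
`(b d + a c)² = (d² - a²)(d² - c²)`, i.e. to `cos (α + δ) = b / d`. Since a chord of the circle of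
diameter `d` subtending the angle `2ψ` at the centre has length `d sin ψ`, the points at angles
`π, π - 2α, 2δ, 0` have consecutive distances `a`, `d sin (π/2 - α - δ) = b` and `c`.
-/

noncomputable def P (R θ : ℝ) : EuclideanSpace ℝ (Fin 2) :=
  (WithLp.equiv 2 (Fin 2 → ℝ)).symm ![R * Real.cos θ, R * Real.sin θ]

open Real

lemma P_apply_zero (R θ : ℝ) : P R θ 0 = R * cos θ := rfl

lemma P_apply_one (R θ : ℝ) : P R θ 1 = R * sin θ := rfl

lemma dist_P (R θ φ : ℝ) (hR : 0 ≤ R) :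
    dist (P R θ) (P R φ) = 2 * R * |sin ((θ - φ) / 2)| := by
  have hchord : (R * cos θ - R * cos φ) ^ 2 + (R * sin θ - R * sin φ) ^ 2
      = (2 * R * sin ((θ - φ) / 2)) ^ 2 := by
    have hcos : cos (θ - φ) = 2 * cos ((θ - φ) / 2) ^ 2 - 1 := by
      rw [← cos_two_mul, mul_div_cancel₀ _ two_ne_zero]
    linear_combination R ^ 2 * sin_sq_add_cos_sq θ + R ^ 2 * sin_sq_add_cos_sq φ
      + 2 * R ^ 2 * cos_sub θ φ - 2 * R ^ 2 * hcos - 4 * R ^ 2 * sin_sq_add_cos_sq ((θ - φ) / 2)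
  rw [EuclideanSpace.dist_eq, Fin.sum_univ_two, P_apply_zero, P_apply_zero, P_apply_one,
    P_apply_one, Real.dist_eq, Real.dist_eq, sq_abs, sq_abs, hchord, sqrt_sq_eq_abs, abs_mul,
    abs_of_nonneg (by positivity : (0 : ℝ) ≤ 2 * R)]

lemma dist_P_of_le {R θ φ : ℝ} (hR : 0 ≤ R) (hφθ : φ ≤ θ) (hθφ : θ ≤ φ + 2 * π) :
    dist (P R θ) (P R φ) = 2 * R * sin ((θ - φ) / 2) := by
  rw [dist_P R θ φ hR, abs_of_nonneg (sin_nonneg_of_nonneg_of_le_pi (by linarith) (by linarith))]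

lemma cos_arcsin_add_arcsin {x y : ℝ} (hx₁ : -1 ≤ x) (hx₂ : x ≤ 1) (hy₁ : -1 ≤ y) (hy₂ : y ≤ 1) :
    cos (arcsin x + arcsin y) = √((1 - x ^ 2) * (1 - y ^ 2)) - x * y := by
  rw [cos_add, cos_arcsin, cos_arcsin, sin_arcsin hx₁ hx₂, sin_arcsin hy₁ hy₂,
    sqrt_mul' _ (by nlinarith)]

lemma add_mul_sq_eq_of_sq_eq {a b c d : ℝ} (hd : d ≠ 0)
    (hrel : d ^ 2 = a ^ 2 + b ^ 2 + c ^ 2 + 2 * a * b * c / d) :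
    (b * d + a * c) ^ 2 = (d ^ 2 - a ^ 2) * (d ^ 2 - c ^ 2) := by
  have hcubic : d ^ 3 = (a ^ 2 + b ^ 2 + c ^ 2) * d + 2 * a * b * c := by
    field_simp at hrel
    linear_combination hrel
  linear_combination -d * hcubic

lemma lt_and_lt_of_sq_eq {a b c d : ℝ} (ha : 0 < a) (hb : 0 < b) (hc : 0 < c) (hd : 0 < d)
    (hrel : d ^ 2 = a ^ 2 + b ^ 2 + c ^ 2 + 2 * a * b * c / d) : a < d ∧ c < d := by
  have habcd : 0 < 2 * a * b * c / d := by positivity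
  constructor <;> exact lt_of_pow_lt_pow_left₀ 2 hd.le (by nlinarith)

lemma cos_arcsin_add_arcsin_of_sq_eq {a b c d : ℝ} (ha : 0 < a) (hb : 0 < b) (hc : 0 < c)
    (hd : 0 < d) (hrel : d ^ 2 = a ^ 2 + b ^ 2 + c ^ 2 + 2 * a * b * c / d) :
    cos (arcsin (a / d) + arcsin (c / d)) = b / d := by
  obtain ⟨had, hcd⟩ := lt_and_lt_of_sq_eq ha hb hc hd hrel
  have hx : a / d ≤ 1 := (div_le_one hd).2 had.le
  have hy : c / d ≤ 1 := (div_le_one hd).2 hcd.le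
  have hprod : (1 - (a / d) ^ 2) * (1 - (c / d) ^ 2) = ((b * d + a * c) / d ^ 2) ^ 2 := by
    field_simp
    linear_combination -(add_mul_sq_eq_of_sq_eq hd.ne' hrel)
  rw [cos_arcsin_add_arcsin (by linarith [div_pos ha hd]) hx (by linarith [div_pos hc hd]) hy,
    hprod, sqrt_sq (by positivity)]
  field_simp
  ring

lemma sin_arcsin_div {a d : ℝ} (ha : 0 ≤ a) (had : a ≤ d) : sin (arcsin (a / d)) = a / d :=
  sin_arcsin (by linarith [div_nonneg ha (ha.trans had)]) (div_le_one_of_le₀ had (ha.trans had))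

theorem quadrilateral_existence (a b c d : ℝ)
    (ha : 0 < a) (hb : 0 < b) (hc : 0 < c) (hd : 0 < d)
    (hrel : d ^ 2 = a ^ 2 + b ^ 2 + c ^ 2 + 2 * a * b * c / d) :
    ∃ β γ : ℝ, Real.pi ≥ β ∧ β ≥ γ ∧ γ ≥ 0 ∧
      dist (P (d / 2) Real.pi) (P (d / 2) β) = a ∧
      dist (P (d / 2) β) (P (d / 2) γ) = b ∧
      dist (P (d / 2) γ) (P (d / 2) 0) = c := by
  obtain ⟨had, hcd⟩ := lt_and_lt_of_sq_eq ha hb hc hd hrel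
  set α := arcsin (a / d)
  set δ := arcsin (c / d)
  have hsinα : sin α = a / d := sin_arcsin_div ha.le had.le
  have hsinδ : sin δ = c / d := sin_arcsin_div hc.le hcd.le
  have hcos : cos (α + δ) = b / d := cos_arcsin_add_arcsin_of_sq_eq ha hb hc hd hrel
  have hα : 0 ≤ α := arcsin_nonneg.2 (by positivity)
  have hδ : 0 ≤ δ := arcsin_nonneg.2 (by positivity)
  have hαδ : α + δ ≤ π / 2 := by
    by_contra! h
    have := cos_nonpos_of_pi_div_two_le_of_le h.le
      (by linarith [arcsin_le_pi_div_two (a / d), arcsin_le_pi_div_two (c / d)])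
    linarith [div_pos hb hd]
  have hR : 0 ≤ d / 2 := by positivity
  refine ⟨π - 2 * α, 2 * δ, by linarith, by linarith, by linarith, ?_, ?_, ?_⟩
  · rw [dist_P_of_le hR (by linarith) (by linarith), show (π - (π - 2 * α)) / 2 = α by ring, hsinα]
    field_simp
  · rw [dist_P_of_le hR (by linarith) (by linarith [pi_pos]),
      show (π - 2 * α - 2 * δ) / 2 = π / 2 - (α + δ) by ring, sin_pi_div_two_sub, hcos]
    field_simp
  · rw [dist_P_of_le hR (by linarith) (by linarith [pi_pos]), show (2 * δ - 0) / 2 = δ by ring,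
      hsinδ]
    field_simp
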